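/- arXiv:1409.4226 — 7 statements merged into one kernel-verified Lean document; each statement's English description precedes it below -/
import Mathlib

section
/- Let T : Π → A be a function on a group Π with values in an integral domain A of characteristic ≠ 2 satisfying: (P1) T(1)=2, (P2) T(g₁g₂)=T(g₂g₁), (P3) T(g₁)T(g₂)T(g₃)+T(g₁g₂g₃)+T(g₁g₃g₂)−T(g₁g₂)T(g₃)−T(g₂g₃)T(g₁)−T(g₁g₃)T(g₂)=0, and (P4) T(g)²−T(g²)=2, for all g,g₁,g₂,g₃ ∈ Π. Then T satisfies (C2): T(g₁)T(g₂) = T(g₁g₂) + T(g₁⁻¹g₂) for all g₁,g₂ ∈ Π. -/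
/-!
Specialising (P3) to `g₂ = g₃` and eliminating `T (g²)` with (P4) gives, after cancelling `2`,
the recursion `T (a b) T b = T (a b²) + T a`. Taking `a = x²`, `b = x⁻¹` it yields
`T x T x⁻¹ = T x ²`, and symmetrically `T x⁻¹ T x = T x⁻¹ ²`, so `(T x⁻¹ - T x)² = 0` and `T` is
invariant under inversion. The recursion with `a = g₁ g₂⁻¹`, `b = g₂` is then (C2), because
`T (g₁ g₂⁻¹) = T (g₂ g₁⁻¹) = T (g₁⁻¹ g₂)`.
-/

section PseudoRepresentation

variable {G A : Type*} [Group G] [CommRing A] [IsDomain A] {T : G → A}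

theorem trace_mul_mul_trace_eq (h2 : (2 : A) ≠ 0)
    (hP3 : ∀ g₁ g₂ g₃ : G,
      T g₁ * T g₂ * T g₃ + T (g₁ * g₂ * g₃) + T (g₁ * g₃ * g₂)
        - T (g₁ * g₂) * T g₃ - T (g₂ * g₃) * T g₁ - T (g₁ * g₃) * T g₂ = 0)
    (hP4 : ∀ g : G, T g ^ 2 - T (g ^ 2) = 2) (a b : G) :
    T (a * b) * T b = T (a * b ^ 2) + T a := by
  have h3 := hP3 a b b
  rw [mul_assoc a b b, ← sq] at h3
  refine mul_left_cancel₀ h2 ?_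
  linear_combination -h3 + T a * hP4 b

theorem trace_mul_trace_inv_eq_sq (h2 : (2 : A) ≠ 0) (hP1 : T 1 = 2)
    (hP3 : ∀ g₁ g₂ g₃ : G,
      T g₁ * T g₂ * T g₃ + T (g₁ * g₂ * g₃) + T (g₁ * g₃ * g₂)
        - T (g₁ * g₂) * T g₃ - T (g₂ * g₃) * T g₁ - T (g₁ * g₃) * T g₂ = 0)
    (hP4 : ∀ g : G, T g ^ 2 - T (g ^ 2) = 2) (x : G) :
    T x * T x⁻¹ = T x ^ 2 := by
  have h := trace_mul_mul_trace_eq h2 hP3 hP4 (x ^ 2) x⁻¹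
  rw [show x ^ 2 * x⁻¹ = x by group, show x ^ 2 * x⁻¹ ^ 2 = 1 by group, hP1] at h
  linear_combination h - hP4 x

theorem trace_inv (h2 : (2 : A) ≠ 0) (hP1 : T 1 = 2)
    (hP3 : ∀ g₁ g₂ g₃ : G,
      T g₁ * T g₂ * T g₃ + T (g₁ * g₂ * g₃) + T (g₁ * g₃ * g₂)
        - T (g₁ * g₂) * T g₃ - T (g₂ * g₃) * T g₁ - T (g₁ * g₃) * T g₂ = 0)
    (hP4 : ∀ g : G, T g ^ 2 - T (g ^ 2) = 2) (x : G) :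
    T x⁻¹ = T x := by
  have hx := trace_mul_trace_inv_eq_sq h2 hP1 hP3 hP4 x
  have hx' := trace_mul_trace_inv_eq_sq h2 hP1 hP3 hP4 x⁻¹
  rw [inv_inv] at hx'
  have hsq : (T x⁻¹ - T x) ^ 2 = 0 := by linear_combination -hx - hx'
  exact sub_eq_zero.mp (pow_eq_zero_iff two_ne_zero |>.mp hsq)

end PseudoRepresentation

theorem pseudo_rep_P_implies_C2
    (G : Type*) [Group G] (A : Type*) [CommRing A] [IsDomain A]
    (hchar : ringChar A ≠ 2)
    (T : G → A)
    (hP1 : T 1 = 2)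
    (hP2 : ∀ g₁ g₂ : G, T (g₁ * g₂) = T (g₂ * g₁))
    (hP3 : ∀ g₁ g₂ g₃ : G,
      T g₁ * T g₂ * T g₃ + T (g₁ * g₂ * g₃) + T (g₁ * g₃ * g₂)
        - T (g₁ * g₂) * T g₃ - T (g₂ * g₃) * T g₁ - T (g₁ * g₃) * T g₂ = 0)
    (hP4 : ∀ g : G, T g ^ 2 - T (g ^ 2) = 2) :
    ∀ g₁ g₂ : G, T g₁ * T g₂ = T (g₁ * g₂) + T (g₁⁻¹ * g₂) := by
  intro g₁ g₂
  have h2 : (2 : A) ≠ 0 := Ring.two_ne_zero hchar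
  have hsymm : T (g₁ * g₂⁻¹) = T (g₁⁻¹ * g₂) := by
    rw [← trace_inv h2 hP1 hP3 hP4, mul_inv_rev, inv_inv, hP2]
  have h := trace_mul_mul_trace_eq h2 hP3 hP4 (g₁ * g₂⁻¹) g₂
  rwa [show g₁ * g₂⁻¹ * g₂ = g₁ by group, show g₁ * g₂⁻¹ * g₂ ^ 2 = g₁ * g₂ by group, hsymm] at h
end

section
/- Let T : Π → A be a function on a group Π with values in a commutative ring A satisfying (C1) T(1)=2 and (C2) T(g₁)T(g₂) = T(g₁g₂) + T(g₁⁻¹g₂) for all g₁,g₂ ∈ Π. Then T(g₁g₂) = T(g₂g₁) for all g₁,g₂ ∈ Π. -/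
/-! Swapping `g₁` and `g₂` in (C2) leaves the left side unchanged, so
`T (g₁ * g₂) - T (g₂ * g₁) = T (g₂⁻¹ * g₁) - T (g₁⁻¹ * g₂)`. The two arguments on the right are
mutually inverse, and (C2) at `g₂ = 1` together with (C1) shows that `T` is invariant under
inversion. -/

section TraceRelations

variable {G A : Type*} [Group G] [CommRing A] {T : G → A}

theorem map_inv_eq_of_trace_relations (hC1 : T 1 = 2)
    (hC2 : ∀ g₁ g₂ : G, T g₁ * T g₂ = T (g₁ * g₂) + T (g₁⁻¹ * g₂)) (g : G) :
    T g⁻¹ = T g := by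
  have h := hC2 g 1
  rw [hC1, mul_one, mul_one] at h
  linear_combination -h

theorem map_mul_add_map_inv_mul_comm
    (hC2 : ∀ g₁ g₂ : G, T g₁ * T g₂ = T (g₁ * g₂) + T (g₁⁻¹ * g₂)) (g₁ g₂ : G) :
    T (g₁ * g₂) + T (g₁⁻¹ * g₂) = T (g₂ * g₁) + T (g₂⁻¹ * g₁) := by
  rw [← hC2, ← hC2, mul_comm]

end TraceRelations

theorem C_relations_imply_P2
    (G : Type*) [Group G] (A : Type*) [CommRing A]
    (T : G → A)
    (hC1 : T 1 = 2)
    (hC2 : ∀ g₁ g₂ : G, T g₁ * T g₂ = T (g₁ * g₂) + T (g₁⁻¹ * g₂)) :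
    ∀ g₁ g₂ : G, T (g₁ * g₂) = T (g₂ * g₁) := by
  intro g₁ g₂
  have hswap := map_mul_add_map_inv_mul_comm hC2 g₁ g₂
  have hinv : T (g₂⁻¹ * g₁) = T (g₁⁻¹ * g₂) := by
    rw [← map_inv_eq_of_trace_relations hC1 hC2, mul_inv_rev, inv_inv]
  rw [hinv] at hswap
  exact add_right_cancel hswap
end

section
/- For a function T : Π → A from a group Π into an integral domain A with char(A) ≠ 2, the system of conditions (P1)–(P4) (pseudo-SL₂-representation axioms) is equivalent to the system (C1)–(C2): T(1)=2 and T(g₁)T(g₂) = T(g₁g₂) + T(g₁⁻¹g₂). -/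
/-!
Specialising (P3) to `(g₂g₁⁻¹, g₁, g₁)` and eliminating `T(g₁²)` with (P4) yields twice the
relation (C2); as `2 ≠ 0` in the domain `A`, (C2) follows. Conversely, (C2) with `g₂ = 1` gives
`T g⁻¹ = T g`, whence the class-function property (P2), and (P3), (P4) are sums of instances
of (C2).
-/

section

variable {G : Type*} [Group G] {A : Type*} [CommRing A]

def TraceRelation (T : G → A) : Prop :=
  ∀ g₁ g₂ : G, T g₁ * T g₂ = T (g₁ * g₂) + T (g₁⁻¹ * g₂)

variable {T : G → A}

namespace TraceRelation

theorem map_inv (hT : TraceRelation T) (h1 : T 1 = 2) (g : G) : T g⁻¹ = T g := by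
  have h := hT g 1
  rw [mul_one, mul_one, h1] at h
  linear_combination -h

theorem map_mul_comm (hT : TraceRelation T) (h1 : T 1 = 2) (g₁ g₂ : G) :
    T (g₁ * g₂) = T (g₂ * g₁) := by
  have e : T (g₂⁻¹ * g₁) = T (g₁⁻¹ * g₂) := by
    rw [← hT.map_inv h1 (g₂⁻¹ * g₁), mul_inv_rev, inv_inv]
  linear_combination hT g₂ g₁ - hT g₁ g₂ + e

theorem sq_sub_map_sq (hT : TraceRelation T) (h1 : T 1 = 2) (g : G) :
    T g ^ 2 - T (g ^ 2) = 2 := by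
  rw [sq, sq, hT g g, inv_mul_cancel, h1]
  ring

theorem cubic (hT : TraceRelation T) (h1 : T 1 = 2) (g₁ g₂ g₃ : G) :
    T g₁ * T g₂ * T g₃ + T (g₁ * g₂ * g₃) + T (g₁ * g₃ * g₂)
      - T (g₁ * g₂) * T g₃ - T (g₂ * g₃) * T g₁ - T (g₁ * g₃) * T g₂ = 0 := by
  have e₁ : T ((g₁⁻¹ * g₂)⁻¹ * g₃) = T (g₂⁻¹ * (g₁ * g₃)) := congrArg T (by group)
  have e₂ : T (g₁ * g₃ * g₂) = T (g₂ * (g₁ * g₃)) := hT.map_mul_comm h1 _ _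
  rw [mul_assoc g₁ g₂ g₃, e₂]
  linear_combination T g₃ * hT g₁ g₂ + hT (g₁⁻¹ * g₂) g₃ - hT g₁ (g₂ * g₃)
    - hT g₂ (g₁ * g₃) + e₁ + congrArg T (mul_assoc g₁⁻¹ g₂ g₃)

end TraceRelation

theorem two_mul_traceRelation_defect_eq_zero
    (hP2 : ∀ g₁ g₂ : G, T (g₁ * g₂) = T (g₂ * g₁))
    (hP3 : ∀ g₁ g₂ g₃ : G,
      T g₁ * T g₂ * T g₃ + T (g₁ * g₂ * g₃) + T (g₁ * g₃ * g₂)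
        - T (g₁ * g₂) * T g₃ - T (g₂ * g₃) * T g₁ - T (g₁ * g₃) * T g₂ = 0)
    (hP4 : ∀ g : G, T g ^ 2 - T (g ^ 2) = 2) (a b : G) :
    2 * (T (a * b) + T (a⁻¹ * b) - T a * T b) = 0 := by
  have e₁ : T (b * a⁻¹ * a) = T b := by rw [inv_mul_cancel_right]
  have e₂ : T (b * a⁻¹ * a * a) = T (b * a) := by rw [inv_mul_cancel_right]
  linear_combination hP3 (b * a⁻¹) a a + 2 * T a * e₁ - 2 * e₂ - T (b * a⁻¹) * hP4 a
    - T (b * a⁻¹) * congrArg T (sq a) - 2 * hP2 b a - 2 * hP2 b a⁻¹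

theorem traceRelation_of_pseudoRep [NoZeroDivisors A] (h2 : (2 : A) ≠ 0)
    (hP2 : ∀ g₁ g₂ : G, T (g₁ * g₂) = T (g₂ * g₁))
    (hP3 : ∀ g₁ g₂ g₃ : G,
      T g₁ * T g₂ * T g₃ + T (g₁ * g₂ * g₃) + T (g₁ * g₃ * g₂)
        - T (g₁ * g₂) * T g₃ - T (g₂ * g₃) * T g₁ - T (g₁ * g₃) * T g₂ = 0)
    (hP4 : ∀ g : G, T g ^ 2 - T (g ^ 2) = 2) :
    TraceRelation T := fun a b => by
  have h := two_mul_traceRelation_defect_eq_zero hP2 hP3 hP4 a b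
  linear_combination -(mul_eq_zero.mp h).resolve_left h2

end

theorem pseudo_rep_P_iff_C
    (G : Type*) [Group G] (A : Type*) [CommRing A] [IsDomain A]
    (hchar : ringChar A ≠ 2)
    (T : G → A) :
    (T 1 = 2 ∧
     (∀ g₁ g₂ : G, T (g₁ * g₂) = T (g₂ * g₁)) ∧
     (∀ g₁ g₂ g₃ : G,
       T g₁ * T g₂ * T g₃ + T (g₁ * g₂ * g₃) + T (g₁ * g₃ * g₂)
         - T (g₁ * g₂) * T g₃ - T (g₂ * g₃) * T g₁ - T (g₁ * g₃) * T g₂ = 0) ∧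
     (∀ g : G, T g ^ 2 - T (g ^ 2) = 2))
    ↔
    (T 1 = 2 ∧ ∀ g₁ g₂ : G, T g₁ * T g₂ = T (g₁ * g₂) + T (g₁⁻¹ * g₂)) := by
  constructor
  · rintro ⟨h1, hP2, hP3, hP4⟩
    exact ⟨h1, traceRelation_of_pseudoRep (Ring.two_ne_zero hchar) hP2 hP3 hP4⟩
  · rintro ⟨h1, hT : TraceRelation T⟩
    exact ⟨h1, hT.map_mul_comm h1, hT.cubic h1, hT.sq_sub_map_sq h1⟩
end

section
/- Let R be a local ring, Π a group, and ρ, ρ' : Π → SL₂(R) homomorphisms whose reductions mod the maximal ideal agree and whose common residual representation is irreducible over the algebraically closed residue field k. If there exists γ ∈ GL₂(R) with ρ'(g) = γ⁻¹ρ(g)γ for all g, then there exists γ₀ ∈ I₂ + M₂(𝔪_R) with ρ'(g) = γ₀⁻¹ρ(g)γ₀ for all g; that is, ρ and ρ' are strictly equivalent. -/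
/-!
Since `γ` intertwines `ρ'` with `ρ` and the two reductions agree, `γ mod 𝔪` commutes with the
irreducible residual representation, so by Schur's lemma it is a scalar `c`, nonzero because `γ`
is invertible. Lifting `c` to a unit `u` of `R`, the matrix `u⁻¹ • γ` is `≡ 1 mod 𝔪`, and it
induces the same conjugation as `γ` because `u` is central.
-/

/-- A matrix representation over a field `k` is irreducible if the only submodules of `k²`
invariant under all `ρ g` are `⊥` and `⊤`. -/
def IsIrreducibleMatRep {G k : Type*} [Group G] [Field k]
    (ρ : G → Matrix (Fin 2) (Fin 2) k) : Prop :=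
  ∀ p : Submodule k (Fin 2 → k),
    (∀ g : G, ∀ v ∈ p, Matrix.mulVec (ρ g) v ∈ p) →
    p = ⊥ ∨ p = ⊤

open Matrix IsLocalRing

lemma IsIrreducibleMatRep.eq_smul_one_of_commute {G k : Type*} [Group G] [Field k]
    [IsAlgClosed k] {ρ : G → Matrix (Fin 2) (Fin 2) k} (hρ : IsIrreducibleMatRep ρ)
    {M : Matrix (Fin 2) (Fin 2) k} (hM : ∀ g, Commute M (ρ g)) : ∃ c : k, M = c • 1 := by
  obtain ⟨c, hc⟩ := Module.End.exists_eigenvalue (toLin' M)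
  refine ⟨c, ?_⟩
  have hker : LinearMap.ker (toLin' (M - c • 1)) = Module.End.eigenspace (toLin' M) c := by
    rw [Module.End.eigenspace_def, map_sub, map_smul, toLin'_one, Module.End.one_eq_id]
  have hinv : ∀ g, ∀ v ∈ LinearMap.ker (toLin' (M - c • 1)),
      ρ g *ᵥ v ∈ LinearMap.ker (toLin' (M - c • 1)) := by
    intro g v hv
    have hN : Commute (M - c • 1) (ρ g) := (hM g).sub_left ((Commute.one_left _).smul_left c)
    rw [LinearMap.mem_ker, toLin'_apply] at hv ⊢
    rw [mulVec_mulVec, hN.eq, ← mulVec_mulVec, hv, mulVec_zero]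
  rcases hρ _ hinv with hbot | htop
  · exact (Module.End.hasEigenvalue_iff.mp hc (hker ▸ hbot)).elim
  · rw [LinearMap.ker_eq_top, map_eq_zero_iff _ toLin'.injective] at htop
    exact sub_eq_zero.mp htop

lemma exists_units_smul_map_residue_eq_one {n R : Type*} [Fintype n] [DecidableEq n]
    [Nonempty n] [CommRing R] [IsLocalRing R] (γ : GL n R) {c : ResidueField R}
    (hc : (γ : Matrix n n R).map (residue R) = c • 1) :
    ∃ u : Rˣ, ((u • γ : GL n R) : Matrix n n R).map (residue R) = 1 := by
  have hc0 : c ≠ 0 := by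
    rintro rfl
    have hdet : residue R (γ : Matrix n n R).det = 0 := by
      rw [RingHom.map_det, RingHom.mapMatrix_apply, hc, zero_smul, det_zero]
    exact (γ.isUnit.map detMonoidHom).map (residue R) |>.ne_zero hdet
  obtain ⟨a, rfl⟩ := residue_surjective c
  obtain ⟨v, rfl⟩ := (residue_ne_zero_iff_isUnit a).mp hc0
  refine ⟨v⁻¹, ?_⟩
  rw [Units.val_smul, Units.smul_def, map_smul', hc, smul_smul, ← map_mul, v.inv_mul, map_one,
    one_smul]
  exact fun _ _ => map_mul _ _ _

theorem strict_equivalence_of_equivalence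
    (G : Type*) [Group G] (R : Type*) [CommRing R] [IsLocalRing R]
    [IsAlgClosed (IsLocalRing.ResidueField R)]
    (ρ ρ' : G →* Matrix.SpecialLinearGroup (Fin 2) R)
    (hred : ∀ g : G,
      (ρ g : Matrix (Fin 2) (Fin 2) R).map (IsLocalRing.residue R) =
      (ρ' g : Matrix (Fin 2) (Fin 2) R).map (IsLocalRing.residue R))
    (hirr : IsIrreducibleMatRep
      (fun g : G => (ρ g : Matrix (Fin 2) (Fin 2) R).map (IsLocalRing.residue R)))
    (γ : Matrix.GeneralLinearGroup (Fin 2) R)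
    (hγ : ∀ g : G, (ρ' g : Matrix (Fin 2) (Fin 2) R) =
      (↑γ⁻¹ : Matrix (Fin 2) (Fin 2) R) * (ρ g : Matrix (Fin 2) (Fin 2) R) * γ) :
    ∃ γ₀ : Matrix.GeneralLinearGroup (Fin 2) R,
      (∀ i j : Fin 2,
        (γ₀ : Matrix (Fin 2) (Fin 2) R) i j - (1 : Matrix (Fin 2) (Fin 2) R) i j
          ∈ IsLocalRing.maximalIdeal R) ∧
      ∀ g : G, (ρ' g : Matrix (Fin 2) (Fin 2) R) =
        (↑γ₀⁻¹ : Matrix (Fin 2) (Fin 2) R) * (ρ g : Matrix (Fin 2) (Fin 2) R) * γ₀ := by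
  have hcomm : ∀ g, Commute ((γ : Matrix (Fin 2) (Fin 2) R).map (residue R))
      ((ρ g : Matrix (Fin 2) (Fin 2) R).map (residue R)) := by
    intro g
    have hint : (γ : Matrix (Fin 2) (Fin 2) R) * ρ' g = ρ g * γ := by
      rw [hγ g, ← mul_assoc, ← mul_assoc, γ.mul_inv, one_mul]
    simpa only [commute_iff_eq, Matrix.map_mul, ← hred g] using congrArg (·.map (residue R)) hint
  obtain ⟨c, hc⟩ := hirr.eq_smul_one_of_commute hcomm
  obtain ⟨u, hu⟩ := exists_units_smul_map_residue_eq_one γ hc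
  refine ⟨u • γ, fun i j => ?_, fun g => ?_⟩
  · have hres_one : ((1 : Matrix (Fin 2) (Fin 2) R).map (residue R)) = 1 :=
      Matrix.map_one _ (map_zero _) (map_one _)
    have := congrFun (congrFun (hu.trans hres_one.symm) i) j
    rwa [← residue_eq_zero_iff, map_sub, sub_eq_zero]
  · rw [hγ g, Units.smul_inv, Units.val_smul, Units.val_smul, smul_mul_assoc, mul_smul_comm,
      smul_mul_assoc, smul_smul, mul_inv_cancel, one_smul]
end

section
/- The homomorphism f : F₂ → SL₂(A) from the free group on a, b sending a ↦ C(α) = [[α,1],[0,α⁻¹]] and b ↦ D(α,β) = [[α,0],[β,α⁻¹]], over a commutative ring A with α ∈ A× and β ∈ A, satisfies the trefoil relation f(a)f(b)f(a) = f(b)f(a)f(b) if and only if α² + α⁻² + β − 1 = 0, provided A is an integral domain. -/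
/-!
Writing `a = α` and `b = α⁻¹`, a direct computation gives
`C D C - D C D = (a² + b² + β - a b) • !![0, 1; -β, 0]` over any commutative ring. Since the
matrix on the right has an entry equal to `1`, the trefoil relation holds exactly when the scalar
vanishes, and `a b = 1` turns that scalar into the Riley polynomial.
-/

theorem Matrix.smul_eq_zero_iff_of_apply_eq_one {m n R : Type*} [MulZeroOneClass R]
    {M : Matrix m n R} {i : m} {j : n} (hM : M i j = 1) (r : R) : r • M = 0 ↔ r = 0 := by
  refine ⟨fun h => by simpa [hM] using congrFun₂ h i j, fun h => ?_⟩
  ext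
  simp [h]

theorem riley_trefoil_defect {A : Type*} [CommRing A] (a b β : A) :
    !![a, 1; 0, b] * !![a, 0; β, b] * !![a, 1; 0, b] -
        !![a, 0; β, b] * !![a, 1; 0, b] * !![a, 0; β, b] =
      (a ^ 2 + b ^ 2 + β - a * b) • !![0, 1; -β, 0] := by
  simp only [Matrix.mul_fin_two, Matrix.of_sub_of, Matrix.smul_of, Matrix.cons_sub_cons,
    Matrix.smul_cons, Matrix.empty_sub_empty, Matrix.smul_empty, smul_eq_mul]
  ring_nf

theorem trefoil_relation_iff_riley_polynomial_general
    (A : Type*) [CommRing A] (α : Aˣ) (β : A) :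
    let C : Matrix (Fin 2) (Fin 2) A := !![(α : A), 1; 0, ((α⁻¹ : Aˣ) : A)]
    let D : Matrix (Fin 2) (Fin 2) A := !![(α : A), 0; β, ((α⁻¹ : Aˣ) : A)]
    (C * D * C = D * C * D) ↔
      (α : A) ^ 2 + ((α⁻¹ : Aˣ) : A) ^ 2 + β - 1 = 0 := by
  intro C D
  rw [← sub_eq_zero, show C * D * C - D * C * D = _ from riley_trefoil_defect _ _ β,
    α.mul_inv]
  exact Matrix.smul_eq_zero_iff_of_apply_eq_one (i := 0) (j := 1) rfl _

theorem trefoil_relation_iff_riley_polynomial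
    (A : Type*) [CommRing A] [IsDomain A] (α : Aˣ) (β : A) :
    let C : Matrix (Fin 2) (Fin 2) A := !![(α : A), 1; 0, ((α⁻¹ : Aˣ) : A)]
    let D : Matrix (Fin 2) (Fin 2) A := !![(α : A), 0; β, ((α⁻¹ : Aˣ) : A)]
    (C * D * C = D * C * D) ↔
      (α : A) ^ 2 + ((α⁻¹ : Aˣ) : A) ^ 2 + β - 1 = 0 :=
  trefoil_relation_iff_riley_polynomial_general A α β
end

section
/- Let k be a field, char(k) ≠ 2, and let t, x, u, v ∈ k satisfy t ≠ 0, t + t⁻¹ = x, x² − 4 ≠ 0, u ≠ 0, v ≠ 0, v²u = u + x² − 4. Define s with s² = v, s ≠ 0, r with r² = x² − 4, r = t − t⁻¹, and U := [[1/s, (1−v)/(s·r)],[r/(2s), (1+v)/(2s)]]. Then det(U) = 1 and U·[[t,1],[0,t⁻¹]]·U⁻¹ = [[x/2, 1],[(x²−4)/4, x/2]]. -/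
/-!
With `v = s²`, `w = t⁻¹` and `r = t - w` one has `det U = v / s² = 1`, and
`U * !![t, 1; 0, w] = !![(t + w)/2, 1; ((t - w)/2)², (t + w)/2] * U` holds as an identity of
rational functions in independent `s, t, w`. Since `x = t + w` and `(x² - 4)/4 = (r/2)²`,
conjugating by `U` gives the formula.
-/

namespace RileyConjugation

variable {k : Type*} [Field k]

def conjugator (s r : k) : Matrix (Fin 2) (Fin 2) k :=
  !![1 / s, (1 - s ^ 2) / (s * r); r / (2 * s), (1 + s ^ 2) / (2 * s)]

theorem det_conjugator {s r : k} (h2 : (2 : k) ≠ 0) (hs : s ≠ 0) (hr : r ≠ 0) :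
    (conjugator s r).det = 1 := by
  rw [conjugator, Matrix.det_fin_two_of]
  field_simp
  ring

theorem conjugator_mul_triangular {s t w : k} (h2 : (2 : k) ≠ 0) (hs : s ≠ 0) (hr : t - w ≠ 0) :
    conjugator s (t - w) * !![t, 1; 0, w] =
      !![(t + w) / 2, 1; ((t - w) / 2) ^ 2, (t + w) / 2] * conjugator s (t - w) := by
  rw [conjugator, Matrix.mul_fin_two, Matrix.mul_fin_two]
  simp only [EmbeddingLike.apply_eq_iff_eq, Matrix.vecCons_inj, and_true]
  refine ⟨⟨?_, ?_⟩, ?_, ?_⟩ <;> field_simp <;> ring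

theorem conjugator_mul_triangular_mul_inv {s t w : k} (h2 : (2 : k) ≠ 0) (hs : s ≠ 0)
    (hr : t - w ≠ 0) :
    conjugator s (t - w) * !![t, 1; 0, w] * (conjugator s (t - w))⁻¹ =
      !![(t + w) / 2, 1; ((t - w) / 2) ^ 2, (t + w) / 2] := by
  rw [conjugator_mul_triangular h2 hs hr, Matrix.mul_nonsing_inv_cancel_right]
  simp [det_conjugator h2 hs hr]

end RileyConjugation

open RileyConjugation in
theorem conjugation_formula_A_general
    (k : Type*) [Field k] (hchar : ringChar k ≠ 2)
    (t x v s r : k)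
    (htx : t + t⁻¹ = x) (hx : x ^ 2 - 4 ≠ 0)
    (hs : s ^ 2 = v) (hs0 : s ≠ 0)
    (hr2 : r ^ 2 = x ^ 2 - 4) (hr : r = t - t⁻¹) :
    let U : Matrix (Fin 2) (Fin 2) k :=
      !![1 / s, (1 - v) / (s * r); r / (2 * s), (1 + v) / (2 * s)]
    Matrix.det U = 1 ∧
    U * !![t, 1; 0, t⁻¹] * U⁻¹ = !![x / 2, 1; (x ^ 2 - 4) / 4, x / 2] := by
  have h2 : (2 : k) ≠ 0 := Ring.two_ne_zero hchar
  have hr0 : r ≠ 0 := by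
    rintro rfl
    exact hx (by rw [← hr2, zero_pow two_ne_zero])
  have hA : (x ^ 2 - 4) / 4 = (r / 2) ^ 2 := by
    rw [div_pow, hr2]
    norm_num
  rw [hA]
  subst hs htx hr
  exact ⟨det_conjugator h2 hs0 hr0, conjugator_mul_triangular_mul_inv h2 hs0 hr0⟩

theorem conjugation_formula_A
    (k : Type*) [Field k] (hchar : ringChar k ≠ 2)
    (t x u v s r : k)
    (ht : t ≠ 0) (htx : t + t⁻¹ = x) (hx : x ^ 2 - 4 ≠ 0)
    (hu : u ≠ 0) (hv0 : v ≠ 0) (hv : v ^ 2 * u = u + (x ^ 2 - 4))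
    (hs : s ^ 2 = v) (hs0 : s ≠ 0)
    (hr2 : r ^ 2 = x ^ 2 - 4) (hr : r = t - t⁻¹) :
    let U : Matrix (Fin 2) (Fin 2) k :=
      !![1 / s, (1 - v) / (s * r); r / (2 * s), (1 + v) / (2 * s)]
    Matrix.det U = 1 ∧
    U * !![t, 1; 0, t⁻¹] * U⁻¹ = !![x / 2, 1; (x ^ 2 - 4) / 4, x / 2] :=
  conjugation_formula_A_general k hchar t x v s r htx hx hs hs0 hr2 hr
end

section
/- Let k be a field, char(k) ≠ 2, and let t, x, u, v, s, r ∈ k satisfy t ≠ 0, t + t⁻¹ = x, r = t − t⁻¹, r² = x² − 4 ≠ 0, u ≠ 0, v²u = u + x² − 4, s² = v ≠ 0. With U := [[1/s, (1−v)/(s·r)],[r/(2s), (1+v)/(2s)]], one has U·[[t,0],[u,t⁻¹]]·U⁻¹ = [[x/2, (1−v)²u/(x²−4)],[(1+v)²u/4, x/2]]. -/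
/-!
As `det U = v / s ^ 2 = 1`, the claim is the intertwining identity `U * D = B * U`. After clearing
denominators, each of its four entries is a multiple of the relation `v ^ 2 * u = u + r ^ 2`,
where `r ^ 2 = x ^ 2 - 4`.
-/

section

variable {k : Type*} [Field k]

def rileyConjugator (s v r : k) : Matrix (Fin 2) (Fin 2) k :=
  !![1 / s, (1 - v) / (s * r); r / (2 * s), (1 + v) / (2 * s)]

theorem det_rileyConjugator {s v r : k} (h2 : (2 : k) ≠ 0) (hr : r ≠ 0) :
    (rileyConjugator s v r).det = v / s ^ 2 := by
  rw [rileyConjugator, Matrix.det_fin_two_of]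
  field_simp
  ring

theorem rileyConjugator_mul_lowerTriangular {a b u v s r : k} (h2 : (2 : k) ≠ 0) (hs : s ≠ 0)
    (hr : r ≠ 0) (hab : r = a - b) (hv : v ^ 2 * u = u + r ^ 2) :
    rileyConjugator s v r * !![a, 0; u, b] =
      !![(a + b) / 2, (1 - v) ^ 2 * u / r ^ 2; (1 + v) ^ 2 * u / 4, (a + b) / 2] *
        rileyConjugator s v r := by
  have h4 : (4 : k) ≠ 0 := by rw [show (4 : k) = 2 ^ 2 by norm_num]; exact pow_ne_zero 2 h2
  subst hab
  rw [rileyConjugator, Matrix.mul_fin_two, Matrix.mul_fin_two]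
  ext i j
  fin_cases i <;> fin_cases j <;>
    simp only [Fin.zero_eta, Fin.mk_one, Fin.isValue, Matrix.of_apply, Matrix.cons_val',
      Matrix.cons_val_zero, Matrix.cons_val_one, Matrix.cons_val_fin_one] <;>
    field_simp
  · linear_combination -hv
  · linear_combination (1 - v) * hv
  · linear_combination -4 * hv
  · linear_combination 4 * (1 + v) * hv

end

theorem conjugation_formula_B_general
    (k : Type*) [Field k] (hchar : ringChar k ≠ 2)
    (t x u v s r : k)
    (htx : t + t⁻¹ = x) (hr : r = t - t⁻¹)
    (hr2 : r ^ 2 = x ^ 2 - 4) (hx : x ^ 2 - 4 ≠ 0)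
    (hv : v ^ 2 * u = u + (x ^ 2 - 4))
    (hs : s ^ 2 = v) (hv0 : v ≠ 0) :
    let U : Matrix (Fin 2) (Fin 2) k :=
      !![1 / s, (1 - v) / (s * r); r / (2 * s), (1 + v) / (2 * s)]
    U * !![t, 0; u, t⁻¹] * U⁻¹ =
      !![x / 2, (1 - v) ^ 2 * u / (x ^ 2 - 4); (1 + v) ^ 2 * u / 4, x / 2] := by
  show rileyConjugator s v r * !![t, 0; u, t⁻¹] * (rileyConjugator s v r)⁻¹ = _
  have h2 : (2 : k) ≠ 0 := Ring.two_ne_zero hchar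
  have hs0 : s ≠ 0 := by rintro rfl; exact hv0 (by rw [← hs]; ring)
  have hr0 : r ≠ 0 := by rintro rfl; exact hx (by rw [← hr2]; ring)
  have hU : IsUnit (rileyConjugator s v r).det := by
    rw [det_rileyConjugator h2 hr0]
    exact (div_ne_zero hv0 (pow_ne_zero 2 hs0)).isUnit
  rw [← hr2] at hv ⊢
  rw [← htx, rileyConjugator_mul_lowerTriangular h2 hs0 hr0 hr hv,
    Matrix.mul_nonsing_inv_cancel_right _ _ hU]

theorem conjugation_formula_B
    (k : Type*) [Field k] (hchar : ringChar k ≠ 2)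
    (t x u v s r : k)
    (ht : t ≠ 0) (htx : t + t⁻¹ = x) (hr : r = t - t⁻¹)
    (hr2 : r ^ 2 = x ^ 2 - 4) (hx : x ^ 2 - 4 ≠ 0)
    (hu : u ≠ 0) (hv : v ^ 2 * u = u + (x ^ 2 - 4))
    (hs : s ^ 2 = v) (hv0 : v ≠ 0) :
    let U : Matrix (Fin 2) (Fin 2) k :=
      !![1 / s, (1 - v) / (s * r); r / (2 * s), (1 + v) / (2 * s)]
    U * !![t, 0; u, t⁻¹] * U⁻¹ =
      !![x / 2, (1 - v) ^ 2 * u / (x ^ 2 - 4); (1 + v) ^ 2 * u / 4, x / 2] :=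
  conjugation_formula_B_general k hchar t x u v s r htx hr hr2 hx hv hs hv0
end
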